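/- Order Claim: Let a, b, c, d be four points on a 1.5D terrain T with x(a) < x(b) < x(c) < x(d). If a sees c and b sees d, then a sees d. -/
import Mathlib


/-- A point `p = (x_p, f x_p)` on the terrain (graph of `f`) sees `q = (x_q, f x_q)`
iff every point of the segment `pq` lies on or above the graph of `f`. -/
def seesF (f : ℝ → ℝ) (p q : ℝ) : Prop :=
  ∀ t : ℝ, t ∈ Set.Icc (0:ℝ) 1 → f ((1 - t) * p + t * q) ≤ (1 - t) * f p + t * f q

/-- Order claim: if a < b < c < d, a sees c and b sees d, then a sees d. -/
theorem order_claim (f : ℝ → ℝ) (a b c d : ℝ)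
    (hab : a < b) (hbc : b < c) (hcd : c < d)
    (hac : seesF f a c) (hbd : seesF f b d) : seesF f a d := by
  have hca : (0:ℝ) < c - a := by linarith
  have hdb : (0:ℝ) < d - b := by linarith
  have hda : (0:ℝ) < d - a := by linarith
  have hcb : (0:ℝ) < c - b := by linarith
  -- b is below chord AC
  have hP : (f b - f a) * (c - a) ≤ (f c - f a) * (b - a) := by
    have h := hac ((b - a)/(c - a))
      ⟨div_nonneg (by linarith) hca.le, by rw [div_le_one hca]; linarith⟩
    have he : (1 - (b-a)/(c-a)) * a + (b-a)/(c-a) * c = b := by field_simp; ring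
    rw [he] at h
    have h' : f b - f a ≤ ((b-a) * (f c - f a)) / (c-a) := by
      rw [← div_mul_eq_mul_div]; linarith
    rw [le_div_iff₀ hca] at h'
    linarith
  -- c is below chord BD
  have hQ : (f c - f b) * (d - b) ≤ (f d - f b) * (c - b) := by
    have h := hbd ((c - b)/(d - b))
      ⟨div_nonneg (by linarith) hdb.le, by rw [div_le_one hdb]; linarith⟩
    have he : (1 - (c-b)/(d-b)) * b + (c-b)/(d-b) * d = c := by field_simp; ring
    rw [he] at h
    have h' : f c - f b ≤ ((c-b) * (f d - f b)) / (d-b) := by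
      rw [← div_mul_eq_mul_div]; linarith
    rw [le_div_iff₀ hdb] at h'
    linarith
  -- c is below chord AD
  have key1 : (f c - f a) * (d - a) ≤ (f d - f a) * (c - a) := by
    have h3 : (c-b) * ((f c - f a) * (d - a)) ≤ (c-b) * ((f d - f a) * (c - a)) := by
      nlinarith [mul_le_mul_of_nonneg_left hP (by linarith : (0:ℝ) ≤ d - c),
        mul_le_mul_of_nonneg_left hQ hca.le]
    exact le_of_mul_le_mul_left h3 hcb
  -- b is below chord AD
  have key2 : (f b - f a) * (d - a) ≤ (f d - f a) * (b - a) := by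
    have h3 : (c-b) * ((f b - f a) * (d - a)) ≤ (c-b) * ((f d - f a) * (b - a)) := by
      nlinarith [mul_le_mul_of_nonneg_left hP hdb.le,
        mul_le_mul_of_nonneg_left hQ (by linarith : (0:ℝ) ≤ b - a)]
    exact le_of_mul_le_mul_left h3 hcb
  intro t ht
  obtain ⟨ht0, ht1⟩ := ht
  by_cases hx : t * (d - a) ≤ c - a
  · -- the point is left of c : use the chord AC
    set s := t * (d - a) / (c - a) with hs_def
    have hs0 : 0 ≤ s := div_nonneg (by nlinarith) hca.le
    have hs1 : s ≤ 1 := by rw [hs_def, div_le_one hca]; linarith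
    have hsc : s * (c - a) = t * (d - a) := by rw [hs_def]; field_simp
    have h := hac s ⟨hs0, hs1⟩
    have he : (1 - s) * a + s * c = (1 - t) * a + t * d := by linear_combination hsc
    rw [he] at h
    have hkey := mul_le_mul_of_nonneg_left key1 ht0
    have hsc1 : s * (c - a) * f a = t * (d - a) * f a := by rw [hsc]
    have hsc2 : s * (c - a) * f c = t * (d - a) * f c := by rw [hsc]
    have hfin : (1 - s) * f a + s * f c ≤ (1 - t) * f a + t * f d := by
      have h4 : ((1 - s) * f a + s * f c) * (c - a) ≤ ((1 - t) * f a + t * f d) * (c - a) := by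
        nlinarith [hkey, hsc1, hsc2]
      exact le_of_mul_le_mul_right h4 hca
    linarith
  · -- the point is right of b : use the chord BD
    push_neg at hx
    set s := (t * (d - a) - (b - a)) / (d - b) with hs_def
    have hs0 : 0 ≤ s := div_nonneg (by nlinarith) hdb.le
    have hs1 : s ≤ 1 := by rw [hs_def, div_le_one hdb]; nlinarith
    have hsc : s * (d - b) = t * (d - a) - (b - a) := by rw [hs_def]; field_simp
    have h := hbd s ⟨hs0, hs1⟩
    have he : (1 - s) * b + s * d = (1 - t) * a + t * d := by linear_combination hsc
    rw [he] at h
    have hkey := mul_le_mul_of_nonneg_left key2 (by linarith : (0:ℝ) ≤ 1 - t)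
    have hsc1 : s * (d - b) * f b = (t * (d - a) - (b - a)) * f b := by rw [hsc]
    have hsc2 : s * (d - b) * f d = (t * (d - a) - (b - a)) * f d := by rw [hsc]
    have hfin : (1 - s) * f b + s * f d ≤ (1 - t) * f a + t * f d := by
      have h4 : ((1 - s) * f b + s * f d) * (d - b) ≤ ((1 - t) * f a + t * f d) * (d - b) := by
        nlinarith [hkey, hsc1, hsc2]
      exact le_of_mul_le_mul_right h4 hdb
    linarith
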